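/- arXiv:math/0509645 — 11 statements merged into one kernel-verified Lean document; each statement's English description precedes it below -/
import Mathlib

section
/- Let F(G(x)) denote the composition of the two homogeneous quadratic maps below. For every x = (x₀,x₁,x₂) ∈ ℂ³ one has the exact identity F(G(x)) = ((B·x)·(β·G(x))) • x, i.e. each coordinate of F(G(x)) equals the scalar (B·x)(β·G(x)) times the corresponding coordinate of x. (Thus G induces the inverse of the birational map f_{α,β} of the projective plane.) -/
/-- The homogeneous quadratic map `F(x₀,x₁,x₂) = (x₀(β·x), x₂(β·x), x₀(α·x))`
inducing the birational map `f_{α,β}` of the projective plane. -/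
noncomputable def Fmap (a0 a1 a2 b0 b1 b2 : ℂ) (y : ℂ × ℂ × ℂ) : ℂ × ℂ × ℂ :=
  (y.1 * (b0 * y.1 + b1 * y.2.1 + b2 * y.2.2),
   y.2.2 * (b0 * y.1 + b1 * y.2.1 + b2 * y.2.2),
   y.1 * (a0 * y.1 + a1 * y.2.1 + a2 * y.2.2))

/-- With `A = (α₀, α₂, −β₀)` and `B = (−α₁, 0, β₁)`, the homogeneous map
`G(x₀,x₁,x₂) = (x₀(B·x), x₀(A·x) − β₂x₁x₂, x₁(B·x))` inducing `f_{α,β}⁻¹`. -/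
noncomputable def Gmap (a0 a1 a2 b0 b1 b2 : ℂ) (y : ℂ × ℂ × ℂ) : ℂ × ℂ × ℂ :=
  (y.1 * (-a1 * y.1 + b1 * y.2.2),
   y.1 * (a0 * y.1 + a2 * y.2.1 - b0 * y.2.2) - b2 * y.2.1 * y.2.2,
   y.2.1 * (-a1 * y.1 + b1 * y.2.2))

/-- For every `x ∈ ℂ³`, one has `F(G(x)) = ((B·x)(β·G(x))) • x`. -/
theorem stmt0 (a0 a1 a2 b0 b1 b2 : ℂ) (x : ℂ × ℂ × ℂ) :
    Fmap a0 a1 a2 b0 b1 b2 (Gmap a0 a1 a2 b0 b1 b2 x) =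
      ((-a1 * x.1 + b1 * x.2.2) *
        (b0 * (Gmap a0 a1 a2 b0 b1 b2 x).1 + b1 * (Gmap a0 a1 a2 b0 b1 b2 x).2.1 +
          b2 * (Gmap a0 a1 a2 b0 b1 b2 x).2.2)) • x := by
  obtain ⟨x0, x1, x2⟩ := x
  simp only [Fmap, Gmap, Prod.smul_mk, smul_eq_mul, Prod.mk.injEq]
  refine ⟨by ring, by ring, by ring⟩
end

section
/- The determinant of the 3×3 Jacobian matrix (∂Fᵢ/∂xⱼ)₀≤i,j≤2 of the map F equals 2·x₀·(β·x)·(β₁(α·x) − α₁(β·x)) for every x = (x₀,x₁,x₂) ∈ ℂ³. -/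
theorem fderiv_mul_apply_of_hasFDerivAt {𝕜 E : Type*} [NontriviallyNormedField 𝕜]
    [NormedAddCommGroup E] [NormedSpace 𝕜 E] {m ℓ : E → 𝕜} {m' ℓ' : E →L[𝕜] 𝕜} {x : E}
    (hm : HasFDerivAt m m' x) (hℓ : HasFDerivAt ℓ ℓ' x) (v : E) :
    fderiv 𝕜 (fun y => m y * ℓ y) x v = m' v * ℓ x + m x * ℓ' v := by
  rw [(hm.fun_mul hℓ).fderiv]
  simp only [add_apply, smul_apply, smul_eq_mul]
  ring

theorem fderiv_coord_mul_linearForm_apply (c0 c1 c2 : ℂ) (k : Fin 3) (x v : Fin 3 → ℂ) :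
    fderiv ℂ (fun y : Fin 3 → ℂ => y k * (c0 * y 0 + c1 * y 1 + c2 * y 2)) x v =
      v k * (c0 * x 0 + c1 * x 1 + c2 * x 2) + x k * (c0 * v 0 + c1 * v 1 + c2 * v 2) := by
  have hcoord (i : Fin 3) := hasFDerivAt_apply (𝕜 := ℂ) i x
  have hform := (((hcoord 0).const_mul c0).fun_add ((hcoord 1).const_mul c1)).fun_add
    ((hcoord 2).const_mul c2)
  rw [fderiv_mul_apply_of_hasFDerivAt (hcoord k) hform]
  simp

/-- The determinant of the Jacobian matrix `(∂Fᵢ/∂xⱼ)` of the homogeneous quadratic map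
`F(x₀,x₁,x₂) = (x₀(β·x), x₂(β·x), x₀(α·x))` equals `2·x₀·(β·x)·(β₁(α·x) − α₁(β·x))`. -/
theorem stmt1 (a0 a1 a2 b0 b1 b2 : ℂ) (x : Fin 3 → ℂ) :
    Matrix.det (Matrix.of fun i j : Fin 3 =>
        fderiv ℂ (fun y : Fin 3 → ℂ =>
          ![y 0 * (b0 * y 0 + b1 * y 1 + b2 * y 2),
            y 2 * (b0 * y 0 + b1 * y 1 + b2 * y 2),
            y 0 * (a0 * y 0 + a1 * y 1 + a2 * y 2)] i) x (Pi.single j 1)) =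
      2 * x 0 * (b0 * x 0 + b1 * x 1 + b2 * x 2) *
        (b1 * (a0 * x 0 + a1 * x 1 + a2 * x 2) - a1 * (b0 * x 0 + b1 * x 1 + b2 * x 2)) := by
  rw [Matrix.det_fin_three]
  simp only [Matrix.of_apply, Matrix.cons_val_zero, Matrix.cons_val_one, Matrix.cons_val_two,
    Matrix.head_cons, Matrix.tail_cons, fderiv_coord_mul_linearForm_apply]
  simp only [Pi.single_eq_same, Pi.single_eq_of_ne, ne_eq, Fin.reduceEq, not_false_eq_true,
    one_ne_zero, zero_ne_one, mul_one, one_mul, mul_zero, zero_mul, add_zero, zero_add]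
  ring
end

section
/- Set C = (α₁β₀−α₀β₁, α₁β₂−α₂β₁, 0) and write C·x = (α₁β₀−α₀β₁)x₀ + (α₁β₂−α₂β₁)x₁. The determinant of the 3×3 Jacobian matrix (∂Gᵢ/∂xⱼ)₀≤i,j≤2 of the map G equals −2·x₀·(B·x)·(C·x) for every x = (x₀,x₁,x₂) ∈ ℂ³. -/
open Matrix

theorem fderiv_apply_apply {𝕜 ι : Type*} [NontriviallyNormedField 𝕜] [Fintype ι] (i : ι)
    (x v : ι → 𝕜) : fderiv 𝕜 (fun y : ι → 𝕜 => y i) x v = v i := by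
  rw [(hasFDerivAt_apply i x).fderiv]
  rfl

section

variable (a0 a1 a2 b0 b1 b2 : ℂ)

def mapG (y : Fin 3 → ℂ) : Fin 3 → ℂ :=
  ![y 0 * (-a1 * y 0 + b1 * y 2),
    y 0 * (a0 * y 0 + a2 * y 1 - b0 * y 2) - b2 * y 1 * y 2,
    y 1 * (-a1 * y 0 + b1 * y 2)]

def jacobianG (x : Fin 3 → ℂ) : Matrix (Fin 3) (Fin 3) ℂ :=
  !![-2 * a1 * x 0 + b1 * x 2, 0, b1 * x 0;
     2 * a0 * x 0 + a2 * x 1 - b0 * x 2, a2 * x 0 - b2 * x 2, -b0 * x 0 - b2 * x 1;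
     -a1 * x 1, -a1 * x 0 + b1 * x 2, b1 * x 1]

theorem fderiv_mapG_apply_single (x : Fin 3 → ℂ) (i j : Fin 3) :
    fderiv ℂ (fun y => mapG a0 a1 a2 b0 b1 b2 y i) x (Pi.single j 1) =
      jacobianG a0 a1 a2 b0 b1 b2 x i j := by
  fin_cases i <;> fin_cases j <;>
    simp (disch := fun_prop) [mapG, jacobianG, fderiv_fun_sub, fderiv_fun_add, fderiv_fun_mul,
      fderiv_apply_apply, Pi.single_apply] <;>
    ring

theorem det_jacobianG (x : Fin 3 → ℂ) :
    (jacobianG a0 a1 a2 b0 b1 b2 x).det = -2 * x 0 * (-a1 * x 0 + b1 * x 2) *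
      ((a1 * b0 - a0 * b1) * x 0 + (a1 * b2 - a2 * b1) * x 1) := by
  simp only [jacobianG, det_fin_three, of_apply, cons_val_zero, cons_val_one, cons_val_two,
    head_cons, tail_cons]
  ring

end

/-- With `A = (α₀, α₂, −β₀)`, `B = (−α₁, 0, β₁)`, `C = (α₁β₀−α₀β₁, α₁β₂−α₂β₁, 0)`,
the determinant of the Jacobian matrix `(∂Gᵢ/∂xⱼ)` of
`G(x₀,x₁,x₂) = (x₀(B·x), x₀(A·x) − β₂x₁x₂, x₁(B·x))` equals `−2·x₀·(B·x)·(C·x)`. -/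
theorem stmt2 (a0 a1 a2 b0 b1 b2 : ℂ) (x : Fin 3 → ℂ) :
    Matrix.det (Matrix.of fun i j : Fin 3 =>
        fderiv ℂ (fun y : Fin 3 → ℂ =>
          ![y 0 * (-a1 * y 0 + b1 * y 2),
            y 0 * (a0 * y 0 + a2 * y 1 - b0 * y 2) - b2 * y 1 * y 2,
            y 1 * (-a1 * y 0 + b1 * y 2)] i) x (Pi.single j 1)) =
      -2 * x 0 * (-a1 * x 0 + b1 * x 2) *
        ((a1 * b0 - a0 * b1) * x 0 + (a1 * b2 - a2 * b1) * x 1) := by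
  have jacobian : (Matrix.of fun i j : Fin 3 =>
      fderiv ℂ (fun y => mapG a0 a1 a2 b0 b1 b2 y i) x (Pi.single j 1)) =
      jacobianG a0 a1 a2 b0 b1 b2 x := by
    ext i j
    exact fderiv_mapG_apply_single a0 a1 a2 b0 b1 b2 x i j
  exact jacobian ▸ det_jacobianG a0 a1 a2 b0 b1 b2 x
end

section
/- For every integer n ≥ 4, the set of real roots of the polynomial qₙ(x) = xⁿ(x² − x − 1) + x² is nonempty, bounded above, and its maximum rₙ satisfies δ⋆ ≤ rₙ < φ; moreover r₄ = δ⋆. (This is the dynamical-degree bound δ⋆ ≤ δ(α,β) ≤ φ in the second case of Theorem 4.1.) -/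
/-- For every `n ≥ 4`, the set of real roots of `qₙ(x) = xⁿ(x² − x − 1) + x²` is nonempty
and bounded above, its maximum `rₙ` satisfies `δ⋆ ≤ rₙ < φ` (where `δ⋆` is the real root
of `x³ − x − 1` and `φ = (1+√5)/2`), and `r₄ = δ⋆`. -/
theorem stmt6 (δ : ℝ) (hδ : δ ^ 3 - δ - 1 = 0) (n : ℕ) (hn : 4 ≤ n) :
    {x : ℝ | x ^ n * (x ^ 2 - x - 1) + x ^ 2 = 0}.Nonempty ∧
    BddAbove {x : ℝ | x ^ n * (x ^ 2 - x - 1) + x ^ 2 = 0} ∧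
    (∃ r : ℝ, IsGreatest {x : ℝ | x ^ n * (x ^ 2 - x - 1) + x ^ 2 = 0} r ∧
      δ ≤ r ∧ r < (1 + Real.sqrt 5) / 2) ∧
    IsGreatest {x : ℝ | x ^ 4 * (x ^ 2 - x - 1) + x ^ 2 = 0} δ := by
  have hs : Real.sqrt 5 ^ 2 = 5 := Real.sq_sqrt (by norm_num)
  have hs0 : (0:ℝ) ≤ Real.sqrt 5 := Real.sqrt_nonneg 5
  set φ : ℝ := (1 + Real.sqrt 5) / 2 with hφdef
  have hφroot : φ ^ 2 - φ - 1 = 0 := by rw [hφdef]; nlinarith [hs]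
  have hδ1 : 1 < δ := by nlinarith [sq_nonneg δ, sq_nonneg (δ - 1), sq_nonneg (δ + 1)]
  have hδ2 : δ ^ 2 - δ - 1 < 0 := by nlinarith
  have hδφ : δ < φ := by rw [hφdef]; nlinarith
  have hφ1 : 1 < φ := lt_trans hδ1 hδφ
  -- every root is < φ
  have hub : ∀ m : ℕ, ∀ x : ℝ, x ^ m * (x ^ 2 - x - 1) + x ^ 2 = 0 → x < φ := by
    intro m x hx
    by_contra h
    push_neg at h
    have hx1 : 1 < x := lt_of_lt_of_le hφ1 h
    have h1 : 0 ≤ x ^ 2 - x - 1 := by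
      nlinarith [mul_nonneg (sub_nonneg.mpr h) (show (0:ℝ) ≤ x + φ - 1 by linarith)]
    have h2 : 0 ≤ x ^ m := pow_nonneg (by linarith) m
    nlinarith [mul_nonneg h2 h1]
  have hcont : Continuous fun x : ℝ => x ^ n * (x ^ 2 - x - 1) + x ^ 2 := by continuity
  have hSne : {x : ℝ | x ^ n * (x ^ 2 - x - 1) + x ^ 2 = 0}.Nonempty := by
    refine ⟨0, ?_⟩
    have h0 : (0:ℝ) ^ n = 0 := zero_pow (by omega)
    simp [Set.mem_setOf_eq, h0]
  have hBdd : BddAbove {x : ℝ | x ^ n * (x ^ 2 - x - 1) + x ^ 2 = 0} :=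
    ⟨φ, fun x hx => (hub n x hx).le⟩
  have hclosed : IsClosed {x : ℝ | x ^ n * (x ^ 2 - x - 1) + x ^ 2 = 0} :=
    isClosed_eq hcont continuous_const
  have hrmem : sSup {x : ℝ | x ^ n * (x ^ 2 - x - 1) + x ^ 2 = 0} ∈
      {x : ℝ | x ^ n * (x ^ 2 - x - 1) + x ^ 2 = 0} :=
    hclosed.csSup_mem hSne hBdd
  have hgreat : IsGreatest {x : ℝ | x ^ n * (x ^ 2 - x - 1) + x ^ 2 = 0}
      (sSup {x : ℝ | x ^ n * (x ^ 2 - x - 1) + x ^ 2 = 0}) :=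
    ⟨hrmem, fun x hx => le_csSup hBdd hx⟩
  -- value at δ is ≤ 0
  have hδn : δ ^ 4 ≤ δ ^ n := pow_le_pow_right₀ hδ1.le hn
  have h4 : δ ^ 4 * (δ ^ 2 - δ - 1) + δ ^ 2 = 0 := by
    have : δ ^ 4 * (δ ^ 2 - δ - 1) + δ ^ 2 = δ ^ 2 * (δ - 1) * (δ ^ 3 - δ - 1) := by ring
    rw [this, hδ, mul_zero]
  have hfδ : δ ^ n * (δ ^ 2 - δ - 1) + δ ^ 2 ≤ 0 := by
    have := mul_le_mul_of_nonpos_right hδn hδ2.le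
    linarith
  have hfφ : (0:ℝ) ≤ φ ^ n * (φ ^ 2 - φ - 1) + φ ^ 2 := by
    rw [hφroot, mul_zero, zero_add]
    positivity
  -- IVT gives a root in [δ, φ]
  obtain ⟨y, hyI, hy0⟩ := intermediate_value_Icc hδφ.le hcont.continuousOn ⟨hfδ, hfφ⟩
  have hymem : y ∈ {x : ℝ | x ^ n * (x ^ 2 - x - 1) + x ^ 2 = 0} := hy0
  refine ⟨hSne, hBdd, ⟨sSup _, hgreat, le_trans hyI.1 (le_csSup hBdd hymem),
    hub n _ hrmem⟩, ?_, ?_⟩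
  · show δ ^ 4 * (δ ^ 2 - δ - 1) + δ ^ 2 = 0
    exact h4
  · intro x hx
    by_contra h
    push_neg at h
    have hx1 : 1 < x := hδ1.trans h
    have hfac : 0 < x ^ 3 - x - 1 := by
      nlinarith [mul_pos (sub_pos.mpr h) (show (0:ℝ) < x ^ 2 + x * δ + δ ^ 2 - 1 by nlinarith)]
    have hx' : x ^ 4 * (x ^ 2 - x - 1) + x ^ 2 = 0 := hx
    nlinarith [mul_pos (mul_pos (show (0:ℝ) < x ^ 2 by positivity) (sub_pos.mpr hx1)) hfac]
end

section
/- For every integer n ≥ 1, the set of real roots of the polynomial qₙ(x) = xⁿ(x² − x − 1) + x² − 1 is nonempty, bounded above, and its maximum rₙ satisfies δ⋆ ≤ rₙ < φ; moreover r₁ = δ⋆ (indeed q₁(x) = x³ − x − 1). (This is the dynamical-degree bound in the third case of Theorem 4.1.) -/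
open Polynomial in
/-- For every `n ≥ 1`, the set of real roots of `qₙ(x) = xⁿ(x² − x − 1) + x² − 1` is
nonempty and bounded above, its maximum `rₙ` satisfies `δ⋆ ≤ rₙ < φ` (where `δ⋆` is the
real root of `x³ − x − 1` and `φ = (1+√5)/2`); moreover `q₁(x) = x³ − x − 1`, and
`r₁ = δ⋆`. -/
theorem stmt7 (δ : ℝ) (hδ : δ ^ 3 - δ - 1 = 0) (n : ℕ) (hn : 1 ≤ n) :
    {x : ℝ | x ^ n * (x ^ 2 - x - 1) + x ^ 2 - 1 = 0}.Nonempty ∧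
    BddAbove {x : ℝ | x ^ n * (x ^ 2 - x - 1) + x ^ 2 - 1 = 0} ∧
    (∃ r : ℝ, IsGreatest {x : ℝ | x ^ n * (x ^ 2 - x - 1) + x ^ 2 - 1 = 0} r ∧
      δ ≤ r ∧ r < (1 + Real.sqrt 5) / 2) ∧
    ((X : ℤ[X]) * (X ^ 2 - X - 1) + X ^ 2 - 1 = X ^ 3 - X - 1) ∧
    IsGreatest {x : ℝ | x ^ 1 * (x ^ 2 - x - 1) + x ^ 2 - 1 = 0} δ := by
  have hs : Real.sqrt 5 ^ 2 = 5 := Real.sq_sqrt (by norm_num)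
  have hs0 : (0:ℝ) ≤ Real.sqrt 5 := Real.sqrt_nonneg 5
  set φ : ℝ := (1 + Real.sqrt 5) / 2 with hφdef
  have hφ : φ ^ 2 = φ + 1 := by rw [hφdef]; nlinarith
  have hφ1 : 1 < φ := by rw [hφdef]; nlinarith
  have hδ1 : 1 < δ := by
    nlinarith [sq_nonneg (δ - 1), sq_nonneg (δ + 1), sq_nonneg δ, sq_nonneg (δ ^ 2 - 1),
      sq_nonneg (δ ^ 2 + δ), sq_nonneg (δ ^ 2 - δ)]
  have hδφ : δ < φ := by
    have hd2 : δ ^ 2 - δ - 1 < 0 := by nlinarith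
    have hsum : 0 < δ + φ - 1 := by linarith
    nlinarith [hd2, hsum]
  -- positivity beyond φ
  have hpos : ∀ x : ℝ, φ ≤ x → 0 < x ^ n * (x ^ 2 - x - 1) + x ^ 2 - 1 := by
    intro x hx
    have hx1 : 1 < x := lt_of_lt_of_le hφ1 hx
    have h1 : 0 ≤ x ^ 2 - x - 1 := by nlinarith
    have h2 : (0:ℝ) ≤ x ^ n := by positivity
    nlinarith [mul_nonneg h2 h1]
  -- value at δ is ≤ 0
  have hfδ : δ ^ n * (δ ^ 2 - δ - 1) + δ ^ 2 - 1 ≤ 0 := by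
    have hp : δ ≤ δ ^ n := by
      calc δ = δ ^ 1 := (pow_one δ).symm
      _ ≤ δ ^ n := pow_le_pow_right₀ (le_of_lt hδ1) hn
    have hneg : δ ^ 2 - δ - 1 ≤ 0 := by nlinarith
    have h := mul_le_mul_of_nonpos_right hp hneg
    nlinarith
  -- root in [δ, φ] by IVT
  have hcont : Continuous fun x : ℝ => x ^ n * (x ^ 2 - x - 1) + x ^ 2 - 1 := by continuity
  obtain ⟨r₀, hr₀mem, hr₀⟩ := intermediate_value_Icc hδφ.le hcont.continuousOn
    ⟨hfδ, (hpos φ le_rfl).le⟩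
  have hne : {x : ℝ | x ^ n * (x ^ 2 - x - 1) + x ^ 2 - 1 = 0}.Nonempty := ⟨r₀, hr₀⟩
  -- the root set is finite
  have hfin : {x : ℝ | x ^ n * (x ^ 2 - x - 1) + x ^ 2 - 1 = 0}.Finite := by
    have hP : (X ^ n * (X ^ 2 - X - 1) + X ^ 2 - 1 : ℝ[X]) ≠ 0 := by
      intro h
      have h2 := congrArg (Polynomial.eval φ) h
      simp only [eval_add, eval_sub, eval_mul, eval_pow, eval_X, eval_one, eval_zero] at h2
      have := hpos φ le_rfl
      linarith
    have h := Polynomial.finite_setOf_isRoot hP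
    convert h using 1
    ext x
    simp [Polynomial.IsRoot]
  have hbdd : BddAbove {x : ℝ | x ^ n * (x ^ 2 - x - 1) + x ^ 2 - 1 = 0} := hfin.bddAbove
  refine ⟨hne, hbdd, ?_, by ring, ?_⟩
  · set S := {x : ℝ | x ^ n * (x ^ 2 - x - 1) + x ^ 2 - 1 = 0}
    have hmem : sSup S ∈ S := hne.csSup_mem hfin
    have hgr : IsGreatest S (sSup S) := ⟨hmem, fun x hx => le_csSup hbdd hx⟩
    refine ⟨sSup S, hgr, le_trans hr₀mem.1 (le_csSup hbdd hr₀), ?_⟩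
    by_contra h
    push_neg at h
    have := hpos (sSup S) h
    have h0 : (sSup S) ^ n * ((sSup S) ^ 2 - sSup S - 1) + (sSup S) ^ 2 - 1 = 0 := hmem
    linarith
  · constructor
    · show δ ^ 1 * (δ ^ 2 - δ - 1) + δ ^ 2 - 1 = 0
      ring_nf
      nlinarith
    · intro x hx
      have hx0 : x ^ 1 * (x ^ 2 - x - 1) + x ^ 2 - 1 = 0 := hx
      have hx' : x ^ 3 - x - 1 = 0 := by linear_combination hx0
      by_contra h
      push_neg at h
      have hlt : δ < x := h
      have hx1 : 1 < x := lt_trans hδ1 hlt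
      have hq : (0:ℝ) < x ^ 2 + x * δ + δ ^ 2 - 1 := by
        have h1 : 1 < x ^ 2 := one_lt_pow₀ hx1 (by norm_num)
        have h2 : 1 < δ ^ 2 := one_lt_pow₀ hδ1 (by norm_num)
        have h3 : 0 < x * δ := by positivity
        linarith
      have key := mul_pos (sub_pos.2 hlt) hq
      have hexp : (x - δ) * (x ^ 2 + x * δ + δ ^ 2 - 1)
          = (x ^ 3 - x - 1) - (δ ^ 3 - δ - 1) := by ring
      rw [hexp, hx', hδ] at key
      linarith
end

section
/- In ℤ[x], the polynomial pₙ(x) = xⁿ(x³ − x − 1) + x³ + x² − 1 divides x^κ − 1 for each of the six pairs (n, κ) = (1, 6), (2, 5), (3, 8), (4, 12), (5, 18), (6, 30). (Hence for n ≤ 6 all roots of pₙ are simple roots of unity, so the induced pullback f_X* is periodic of period κ; these are the parameter varieties V₀,…,V₅ of Theorem 2.) -/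
open Polynomial

/-- The polynomial `p_m(x) = x^m(x³ − x − 1) + x³ + x² − 1` in `ℤ[x]`. -/
noncomputable def pPoly (m : ℕ) : ℤ[X] := X ^ m * (X ^ 3 - X - 1) + X ^ 3 + X ^ 2 - 1

/-- In `ℤ[x]`, `pₙ` divides `x^κ − 1` for `(n, κ) = (1,6), (2,5), (3,8), (4,12), (5,18),
(6,30)`. -/
theorem stmt9 :
    pPoly 1 ∣ X ^ 6 - 1 ∧ pPoly 2 ∣ X ^ 5 - 1 ∧ pPoly 3 ∣ X ^ 8 - 1 ∧
    pPoly 4 ∣ X ^ 12 - 1 ∧ pPoly 5 ∣ X ^ 18 - 1 ∧ pPoly 6 ∣ X ^ 30 - 1 := by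
  unfold pPoly
  refine ⟨⟨1 + -X + X ^ 2, by ring⟩, ⟨1, by ring⟩, ⟨1 + X ^ 2, by ring⟩,
    ⟨1 + X ^ 2 + X ^ 3 + X ^ 5, by ring⟩,
    ⟨1 + X ^ 2 + X ^ 3 + X ^ 4 + X ^ 5 + X ^ 6 + X ^ 7 + X ^ 8 + X ^ 10, by ring⟩,
    ⟨1 + X ^ 2 + X ^ 3 + X ^ 4 + 2 * X ^ 5 + X ^ 6 + 2 * X ^ 7 + 2 * X ^ 8 + 2 * X ^ 9 +
      2 * X ^ 10 + 2 * X ^ 11 + 2 * X ^ 12 + 2 * X ^ 13 + 2 * X ^ 14 + X ^ 15 + 2 * X ^ 16 +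
      X ^ 17 + X ^ 18 + X ^ 19 + X ^ 21, by ring⟩⟩
end

section
/- In ℤ[x] one has the identity p₇(x) = x⁷(x³ − x − 1) + x³ + x² − 1 = (x² − 1)(x³ − 1)(x⁵ − 1); in particular (x − 1)³ divides p₇ while (x − 1)⁴ does not, i.e. 1 is a root of p₇ of multiplicity exactly 3. (This yields the quadratic degree growth of f_{α,β} for parameters in V₆ in Theorem 2.) -/
open Polynomial

lemma pPoly7_factor :
    pPoly 7 = (X - 1) ^ 3 *
      ((X + 1) * (X ^ 2 + X + 1) * (X ^ 4 + X ^ 3 + X ^ 2 + X + 1)) := by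
  simp only [pPoly]; ring

/-- In `ℤ[x]`, `p₇ = (x² − 1)(x³ − 1)(x⁵ − 1)`; in particular `(x − 1)³` divides `p₇`
while `(x − 1)⁴` does not. -/
theorem stmt10 :
    pPoly 7 = (X ^ 2 - 1) * (X ^ 3 - 1) * (X ^ 5 - 1) ∧
    (X - 1) ^ 3 ∣ pPoly 7 ∧ ¬ (X - 1) ^ 4 ∣ pPoly 7 := by
  refine ⟨by simp only [pPoly]; ring, ⟨_, pPoly7_factor⟩, ?_⟩
  intro ⟨q, hq⟩
  rw [pPoly7_factor] at hq
  have h3 : (X - 1 : ℤ[X]) ^ 3 ≠ 0 := pow_ne_zero _ (X_sub_C_ne_zero 1)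
  have hq2 : (X - 1 : ℤ[X]) ^ 3 *
      ((X + 1) * (X ^ 2 + X + 1) * (X ^ 4 + X ^ 3 + X ^ 2 + X + 1)) =
      (X - 1) ^ 3 * ((X - 1) * q) := by rw [hq]; ring
  have := mul_left_cancel₀ h3 hq2
  have hev := congrArg (Polynomial.eval 1) this
  simp at hev
end

section
/- For each integer n ≥ 7, the polynomial p_{n+1}(x) = x^{n+1}(x³ − x − 1) + x³ + x² − 1 has a real root strictly greater than 1, its set of real roots has a maximum δₙ, and 1 < δₙ < δ⋆. Moreover the sequence (δₙ)_{n≥7} is strictly increasing and converges to δ⋆ as n → ∞. (This is the final assertion of Theorem 2: for (α,β) ∈ Vₙ with n ≥ 7 the dynamical degree is δₙ.) -/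
open Filter Set

private noncomputable def ddRoots (n : ℕ) : Set ℝ :=
  {x : ℝ | x ^ (n + 1) * (x ^ 3 - x - 1) + x ^ 3 + x ^ 2 - 1 = 0}

private noncomputable def dd (n : ℕ) : ℝ := sSup (ddRoots n)

private lemma dd_one_mem (n : ℕ) : (1 : ℝ) ∈ ddRoots n := by
  simp [ddRoots]

private lemma dd_cont (n : ℕ) :
    Continuous (fun x : ℝ => x ^ (n + 1) * (x ^ 3 - x - 1) + x ^ 3 + x ^ 2 - 1) := by
  continuity

private lemma dd_closed (n : ℕ) : IsClosed (ddRoots n) :=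
  isClosed_eq (dd_cont n) continuous_const

section delta
variable {δ : ℝ} (hδ : δ ^ 3 - δ - 1 = 0)

private lemma one_lt_delta (hδ : δ ^ 3 - δ - 1 = 0) : 1 < δ := by
  nlinarith [sq_nonneg δ, sq_nonneg (δ-1), sq_nonneg (δ+1), sq_nonneg (δ^2-1), sq_nonneg (δ^2+δ)]

private lemma cubic_neg (hδ : δ ^ 3 - δ - 1 = 0) {x : ℝ} (h1 : 1 < x) (h2 : x < δ) :
    x ^ 3 - x - 1 < 0 := by
  nlinarith [sq_nonneg (x+δ), sq_nonneg (x-δ), mul_pos (sub_pos.2 h2) (sub_pos.2 h1)]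

private lemma cubic_nonneg (hδ : δ ^ 3 - δ - 1 = 0) {x : ℝ} (h2 : δ ≤ x) :
    0 ≤ x ^ 3 - x - 1 := by
  have h1 : 1 < δ := one_lt_delta hδ
  have hq : 0 ≤ x^2 + x*δ + δ^2 - 1 := by nlinarith
  nlinarith [mul_nonneg (sub_nonneg.2 h2) hq]

/-- P is positive at and above δ. -/
private lemma P_pos (hδ : δ ^ 3 - δ - 1 = 0) (n : ℕ) {x : ℝ} (h2 : δ ≤ x) :
    0 < x ^ (n + 1) * (x ^ 3 - x - 1) + x ^ 3 + x ^ 2 - 1 := by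
  have h1 : 1 < δ := one_lt_delta hδ
  have hx1 : 1 < x := lt_of_lt_of_le h1 h2
  have hc : 0 ≤ x ^ 3 - x - 1 := cubic_nonneg hδ h2
  have hp : (0:ℝ) < x ^ (n + 1) := pow_pos (by linarith) _
  have h3 : 0 < x ^ 3 + x ^ 2 - 1 := by nlinarith
  nlinarith [mul_nonneg hp.le hc]

private lemma root_lt_delta (hδ : δ ^ 3 - δ - 1 = 0) (n : ℕ) {x : ℝ} (hx : x ∈ ddRoots n) :
    x < δ := by
  by_contra h
  exact absurd hx.symm (ne_of_lt (P_pos hδ n (le_of_not_gt h)))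

private lemma dd_bddAbove (hδ : δ ^ 3 - δ - 1 = 0) (n : ℕ) : BddAbove (ddRoots n) :=
  ⟨δ, fun x hx => (root_lt_delta hδ n hx).le⟩

private lemma dd_isGreatest (hδ : δ ^ 3 - δ - 1 = 0) (n : ℕ) :
    IsGreatest (ddRoots n) (dd n) := by
  refine ⟨(dd_closed n).csSup_mem ⟨1, dd_one_mem n⟩ (dd_bddAbove hδ n), ?_⟩
  exact fun x hx => le_csSup (dd_bddAbove hδ n) hx

/-- If P n c < 0 with 1 < c, there is a root in (c, δ), hence dd n > c. -/
private lemma dd_gt_of_neg (hδ : δ ^ 3 - δ - 1 = 0) (n : ℕ) {c : ℝ} (hc1 : 1 < c)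
    (hneg : c ^ (n + 1) * (c ^ 3 - c - 1) + c ^ 3 + c ^ 2 - 1 < 0) :
    c < dd n := by
  have hcδ : c < δ := by
    by_contra h
    exact absurd hneg (not_lt.2 (P_pos hδ n (le_of_not_gt h)).le)
  have hP : (0:ℝ) ∈ Ioo (c ^ (n + 1) * (c ^ 3 - c - 1) + c ^ 3 + c ^ 2 - 1)
      (δ ^ (n + 1) * (δ ^ 3 - δ - 1) + δ ^ 3 + δ ^ 2 - 1) :=
    ⟨hneg, P_pos hδ n le_rfl⟩
  obtain ⟨x, hx, hx0⟩ := intermediate_value_Ioo hcδ.le ((dd_cont n).continuousOn) hP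
  exact lt_of_lt_of_le hx.1 ((dd_isGreatest hδ n).2 hx0)

private lemma P_neg_explicit (hδ : δ ^ 3 - δ - 1 = 0) {n : ℕ} (hn : 7 ≤ n) :
    (23/20:ℝ) ^ (n + 1) * ((23/20:ℝ) ^ 3 - 23/20 - 1) + (23/20:ℝ) ^ 3 + (23/20:ℝ) ^ 2 - 1 < 0 := by
  have h8 : ((23:ℝ)/20) ^ 8 ≤ (23/20:ℝ) ^ (n + 1) :=
    pow_le_pow_right₀ (by norm_num) (by omega)
  nlinarith [h8]

end delta

/-- For each `n ≥ 7`, the polynomial `p_{n+1}(x) = x^{n+1}(x³ − x − 1) + x³ + x² − 1` has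
a real root `> 1`, its set of real roots has a maximum `δₙ` with `1 < δₙ < δ⋆` (the real
root of `x³ − x − 1`); moreover `(δₙ)_{n≥7}` is strictly increasing and converges to
`δ⋆`. -/
theorem stmt12 (δ : ℝ) (hδ : δ ^ 3 - δ - 1 = 0) :
    ∃ d : ℕ → ℝ,
      (∀ n : ℕ, 7 ≤ n →
        (∃ x : ℝ, 1 < x ∧ x ^ (n + 1) * (x ^ 3 - x - 1) + x ^ 3 + x ^ 2 - 1 = 0) ∧
        IsGreatest {x : ℝ | x ^ (n + 1) * (x ^ 3 - x - 1) + x ^ 3 + x ^ 2 - 1 = 0} (d n) ∧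
        1 < d n ∧ d n < δ) ∧
      (∀ m n : ℕ, 7 ≤ m → m < n → d m < d n) ∧
      Filter.Tendsto d Filter.atTop (nhds δ) := by
  have h1δ : 1 < δ := one_lt_delta hδ
  -- basic facts for n ≥ 7
  have hmain : ∀ n : ℕ, 7 ≤ n → 1 < dd n ∧ dd n < δ := by
    intro n hn
    have hc : (1:ℝ) < 23/20 := by norm_num
    have h23 : (23/20:ℝ) < dd n := dd_gt_of_neg hδ n hc (P_neg_explicit hδ hn)
    exact ⟨lt_trans hc h23, root_lt_delta hδ n (dd_isGreatest hδ n).1⟩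
  -- strict monotonicity (consecutive)
  have hmono1 : ∀ n : ℕ, 7 ≤ n → dd n < dd (n + 1) := by
    intro n hn
    obtain ⟨h1, h2⟩ := hmain n hn
    have hroot : (dd n) ^ (n + 1) * ((dd n) ^ 3 - dd n - 1) + (dd n) ^ 3 + (dd n) ^ 2 - 1 = 0 :=
      (dd_isGreatest hδ n).1
    have hcneg : (dd n) ^ 3 - dd n - 1 < 0 := cubic_neg hδ h1 h2
    have hpow : (0:ℝ) < (dd n) ^ (n + 1) := pow_pos (by linarith) _
    have hneg : (dd n) ^ (n + 1 + 1) * ((dd n) ^ 3 - dd n - 1)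
        + (dd n) ^ 3 + (dd n) ^ 2 - 1 < 0 := by
      have key : (dd n) ^ (n + 1 + 1) * ((dd n) ^ 3 - dd n - 1)
          = (dd n) ^ (n + 1) * ((dd n) ^ 3 - dd n - 1)
            + (dd n) ^ (n + 1) * (dd n - 1) * ((dd n) ^ 3 - dd n - 1) := by ring
      have hterm : (dd n) ^ (n + 1) * (dd n - 1) * ((dd n) ^ 3 - dd n - 1) < 0 :=
        mul_neg_of_pos_of_neg (mul_pos hpow (by linarith)) hcneg
      linarith [key, hroot, hterm]
    exact dd_gt_of_neg hδ (n + 1) h1 hneg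
  have hmono : ∀ m n : ℕ, 7 ≤ m → m < n → dd m < dd n := by
    intro m n hm hmn
    induction n with
    | zero => omega
    | succ k ih =>
      rcases Nat.lt_succ_iff_lt_or_eq.1 hmn with h | h
      · exact lt_trans (ih h) (hmono1 k (by omega))
      · subst h; exact hmono1 m hm
  -- convergence
  have htend : Tendsto dd atTop (nhds δ) := by
    rw [Metric.tendsto_atTop]
    intro ε hε
    set c : ℝ := max ((1 + δ) / 2) (δ - ε) with hc
    have hc1 : 1 < c := lt_max_of_lt_left (by linarith)
    have hcδ : c < δ := max_lt (by linarith) (by linarith)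
    have hcneg : c ^ 3 - c - 1 < 0 := cubic_neg hδ hc1 hcδ
    -- eventually P n c < 0
    have hpow : Tendsto (fun n : ℕ => c ^ (n + 1)) atTop atTop :=
      (tendsto_pow_atTop_atTop_of_one_lt hc1).comp (tendsto_add_atTop_nat 1)
    have hev : ∀ᶠ n : ℕ in atTop,
        c ^ (n + 1) * (c ^ 3 - c - 1) + c ^ 3 + c ^ 2 - 1 < 0 := by
      have hb : ∀ᶠ n : ℕ in atTop, (c ^ 3 + c ^ 2 - 1) / (-(c ^ 3 - c - 1)) < c ^ (n + 1) :=
        hpow.eventually_gt_atTop _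
      filter_upwards [hb] with n hb
      have hpos : 0 < -(c ^ 3 - c - 1) := by linarith
      rw [div_lt_iff₀ hpos] at hb
      nlinarith
    obtain ⟨N, hN⟩ := hev.exists_forall_of_atTop
    refine ⟨max N 7, fun n hn => ?_⟩
    have hn7 : 7 ≤ n := le_trans (le_max_right N 7) hn
    have hnN : N ≤ n := le_trans (le_max_left N 7) hn
    have h1 : c < dd n := dd_gt_of_neg hδ n hc1 (hN n hnN)
    have h2 : dd n < δ := (hmain n hn7).2
    have h3 : δ - ε ≤ c := le_max_right _ _
    rw [Real.dist_eq, abs_lt]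
    constructor <;> linarith
  refine ⟨dd, fun n hn => ⟨?_, dd_isGreatest hδ n, hmain n hn⟩, hmono, htend⟩
  obtain ⟨h1, _⟩ := hmain n hn
  exact ⟨dd n, h1, (dd_isGreatest hδ n).1⟩
end

section
/- For every integer m with 1 ≤ m ≤ 7, every complex root of the polynomial p_m(x) = x^m(x³ − x − 1) + x³ + x² − 1 has absolute value exactly 1. (Hence for parameters with |𝒪₂| ≤ 7 the spectral radius of f_X* is 1 and the dynamical degree δ(α,β) = 1, as asserted in Theorem 4.2.) -/
/-! For `m ≤ 6` the polynomial `p_m` divides `x^κ - 1` for an explicit `κ`, and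
`p₇ = (x² - 1)(x³ - 1)(x⁵ - 1)`; so every root of `p_m` is a root of unity. -/

section RootsOfUnity

variable {R : Type*} [CommRing R]

theorem pow_thirty_eq_one_of_seventh_root [NoZeroDivisors R] {z : R}
    (hz : z ^ 7 * (z ^ 3 - z - 1) + z ^ 3 + z ^ 2 - 1 = 0) : z ^ 30 = 1 := by
  have hfactor : (z ^ 2 - 1) * (z ^ 3 - 1) * (z ^ 5 - 1) = 0 := by linear_combination hz
  rcases mul_eq_zero.mp hfactor with h | h5
  · rcases mul_eq_zero.mp h with h2 | h3
    · rw [show 30 = 2 * 15 by rfl, pow_mul, sub_eq_zero.mp h2, one_pow]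
    · rw [show 30 = 3 * 10 by rfl, pow_mul, sub_eq_zero.mp h3, one_pow]
  · rw [show 30 = 5 * 6 by rfl, pow_mul, sub_eq_zero.mp h5, one_pow]

theorem exists_pow_eq_one_of_root [NoZeroDivisors R] {m : ℕ} (h1 : 1 ≤ m) (h7 : m ≤ 7)
    {z : R} (hz : z ^ m * (z ^ 3 - z - 1) + z ^ 3 + z ^ 2 - 1 = 0) :
    ∃ κ ≠ 0, z ^ κ = 1 := by
  interval_cases m
  · exact ⟨6, by norm_num, by linear_combination (1 - z + z ^ 2) * hz⟩
  · exact ⟨5, by norm_num, by linear_combination hz⟩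
  · exact ⟨8, by norm_num, by linear_combination (1 + z ^ 2) * hz⟩
  · exact ⟨12, by norm_num, by linear_combination (1 + z ^ 2 + z ^ 3 + z ^ 5) * hz⟩
  · exact ⟨18, by norm_num, by
      linear_combination
        (1 + z ^ 2 + z ^ 3 + z ^ 4 + z ^ 5 + z ^ 6 + z ^ 7 + z ^ 8 + z ^ 10) * hz⟩
  · exact ⟨30, by norm_num, by
      linear_combination
        (1 + z ^ 2 + z ^ 3 + z ^ 4 + 2 * z ^ 5 + z ^ 6 + 2 * z ^ 7 + 2 * z ^ 8 + 2 * z ^ 9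
          + 2 * z ^ 10 + 2 * z ^ 11 + 2 * z ^ 12 + 2 * z ^ 13 + 2 * z ^ 14 + z ^ 15
          + 2 * z ^ 16 + z ^ 17 + z ^ 18 + z ^ 19 + z ^ 21) * hz⟩
  · exact ⟨30, by norm_num, pow_thirty_eq_one_of_seventh_root hz⟩

end RootsOfUnity

/-- For every integer `1 ≤ m ≤ 7`, every complex root of
`p_m(x) = x^m(x³ − x − 1) + x³ + x² − 1` has absolute value exactly `1`. -/
theorem stmt13 (m : ℕ) (h1 : 1 ≤ m) (h7 : m ≤ 7) (z : ℂ)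
    (hz : z ^ m * (z ^ 3 - z - 1) + z ^ 3 + z ^ 2 - 1 = 0) :
    ‖z‖ = 1 := by
  obtain ⟨κ, hκ, hzκ⟩ := exists_pow_eq_one_of_root h1 h7 hz
  exact Complex.norm_eq_one_of_pow_eq_one hzκ hκ
end

section
/- Let a = (1+i)/2 and b = i, and let u : ℕ → ℂ be a sequence with b + u(n) ≠ 0 for all n satisfying u(n+2)·(b + u(n)) = a + u(n+1) for all n (i.e. x_{n+2} = ((1+i)/2 + x_{n+1})/(i + x_n)). Then u is periodic with period 8: u(n+8) = u(n) for all n. (This is the case n = 2 of Theorem 2: the maps f_{α,β} with parameters in V₂ are periodic of period 8.) -/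
private lemma stmt17_key (x0 x1 x2 x3 x4 x5 x6 x7 x8 : ℂ)
    (d0 : Complex.I + x0 ≠ 0) (d1 : Complex.I + x1 ≠ 0) (d2 : Complex.I + x2 ≠ 0)
    (d3 : Complex.I + x3 ≠ 0) (d4 : Complex.I + x4 ≠ 0) (d5 : Complex.I + x5 ≠ 0)
    (d6 : Complex.I + x6 ≠ 0)
    (r0 : x2 * (Complex.I + x0) = (1 + Complex.I) / 2 + x1)
    (r1 : x3 * (Complex.I + x1) = (1 + Complex.I) / 2 + x2)
    (r2 : x4 * (Complex.I + x2) = (1 + Complex.I) / 2 + x3)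
    (r3 : x5 * (Complex.I + x3) = (1 + Complex.I) / 2 + x4)
    (r4 : x6 * (Complex.I + x4) = (1 + Complex.I) / 2 + x5)
    (r5 : x7 * (Complex.I + x5) = (1 + Complex.I) / 2 + x6)
    (r6 : x8 * (Complex.I + x6) = (1 + Complex.I) / 2 + x7) :
    x8 = x0 := by
  have hI : Complex.I * Complex.I = -1 := Complex.I_mul_I
  have hD2 : (Complex.I + x2) * (Complex.I + x0)
      = Complex.I * (x0 + (1+Complex.I)/2) + x1 := by
    linear_combination r0 + (1/2) * hI
  have hE3 : x3 * ((Complex.I + x0) * (Complex.I + x1))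
      = (1+Complex.I)/2 * x0 + x1 + Complex.I := by
    linear_combination (Complex.I + x0) * r1 + r0 + (1/2) * hI
  have hD3 : (Complex.I + x3) * ((Complex.I + x0) * (Complex.I + x1))
      = Complex.I * x0 * (x1 + (1+Complex.I)/2) := by
    linear_combination hE3 + (x1 + (1/2)*x0 + Complex.I) * hI
  have hE4 : x4 * ((Complex.I + x1) * (Complex.I * (x0 + (1+Complex.I)/2) + x1))
      = (1+Complex.I)/2 * x0 * x1 + Complex.I * x0 + (1+Complex.I)/2 * x1
        + (1+Complex.I)/2 * Complex.I := by
    linear_combination (Complex.I + x0) * (Complex.I + x1) * r2 + hE3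
      - x4 * (Complex.I + x1) * hD2 + ((1/2)*x1 + (1/2)*x0 + (1/2)*Complex.I) * hI
  have hD4 : (Complex.I + x4) * ((Complex.I + x1) * (Complex.I * (x0 + (1+Complex.I)/2) + x1))
      = Complex.I * x1 * ((1+Complex.I)/2 * x0 + x1 + Complex.I) := by
    linear_combination hE4 + ((1/2)*x1 + (1/2)*x0*x1 + (1/2)*Complex.I + (1/2)*Complex.I*x1
      + Complex.I*x0 + (1/2)*Complex.I*Complex.I) * hI
  -- nonzeroness facts
  have hQ : Complex.I * (x0 + (1+Complex.I)/2) + x1 ≠ 0 := by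
    rw [← hD2]; exact mul_ne_zero d2 d0
  have h3 : Complex.I * x0 * (x1 + (1+Complex.I)/2) ≠ 0 := by
    rw [← hD3]; exact mul_ne_zero d3 (mul_ne_zero d0 d1)
  have hx0 : x0 ≠ 0 := (mul_ne_zero_iff.mp (mul_ne_zero_iff.mp h3).1).2
  have hx1a : x1 + (1+Complex.I)/2 ≠ 0 := (mul_ne_zero_iff.mp h3).2
  have h4 : Complex.I * x1 * ((1+Complex.I)/2 * x0 + x1 + Complex.I) ≠ 0 := by
    rw [← hD4]; exact mul_ne_zero d4 (mul_ne_zero d1 hQ)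
  have hx1 : x1 ≠ 0 := (mul_ne_zero_iff.mp (mul_ne_zero_iff.mp h4).1).2
  have hP : (1+Complex.I)/2 * x0 + x1 + Complex.I ≠ 0 := (mul_ne_zero_iff.mp h4).2
  -- x5
  have hE5' : x5 * (Complex.I * x0 * (Complex.I * (x0 + (1+Complex.I)/2) + x1)) * (x1 + (1+Complex.I)/2)
      = ((Complex.I + x0) * (Complex.I * x0 + (1+Complex.I)/2 * x1 + (1+Complex.I)/2 * Complex.I))
        * (x1 + (1+Complex.I)/2) := by
    linear_combination ((Complex.I + x0) * (Complex.I + x1) * (Complex.I * (x0 + (1+Complex.I)/2) + x1)) * r3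
      - x5 * (Complex.I * (x0 + (1+Complex.I)/2) + x1) * hD3 + (Complex.I + x0) * hE4
      + ((1/4)*x0*x1 + (1/2)*x0*x0*x1 + (1/4)*Complex.I*x1 + (1/4)*Complex.I*x0
        + (3/4)*Complex.I*x0*x1 + (1/2)*Complex.I*x0*x0 + (1/4)*Complex.I*Complex.I
        + (1/4)*Complex.I*Complex.I*x1 + (3/4)*Complex.I*Complex.I*x0
        + (1/4)*Complex.I*Complex.I*Complex.I) * hI
  have hE5 : x5 * (Complex.I * x0 * (Complex.I * (x0 + (1+Complex.I)/2) + x1))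
      = (Complex.I + x0) * (Complex.I * x0 + (1+Complex.I)/2 * x1 + (1+Complex.I)/2 * Complex.I) :=
    mul_right_cancel₀ hx1a hE5'
  have hD5 : (Complex.I + x5) * (Complex.I * x0 * (Complex.I * (x0 + (1+Complex.I)/2) + x1))
      = (1+Complex.I)/2 * Complex.I * x0 * x1 + Complex.I * ((1+Complex.I)/2) * x1 - x0 - (1+Complex.I)/2 := by
    linear_combination hE5 + ((1/2) + x0 + (1/2)*x0*x1 + (1/2)*Complex.I + (1/2)*Complex.I*x0
      + Complex.I*x0*x0 + (1/2)*Complex.I*Complex.I*x0) * hI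
  have hS : (1+Complex.I)/2 * Complex.I * x0 * x1 + Complex.I * ((1+Complex.I)/2) * x1 - x0 - (1+Complex.I)/2 ≠ 0 := by
    rw [← hD5]; exact mul_ne_zero d5 (mul_ne_zero (mul_ne_zero Complex.I_ne_zero hx0) hQ)
  -- x6
  have hE6' : x6 * (x0 * x1) * ((1+Complex.I)/2 * x0 + x1 + Complex.I)
      = (-((Complex.I * x0 + (1+Complex.I)/2 * Complex.I) * (Complex.I + x1)))
        * ((1+Complex.I)/2 * x0 + x1 + Complex.I) := by
    linear_combination (-(Complex.I * x0 * (Complex.I + x1) * (Complex.I * (x0 + (1+Complex.I)/2) + x1))) * r4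
      + x6 * Complex.I * x0 * hD4 - (Complex.I + x1) * hE5
      + (- (1/2)*x0*x1*x1 + x0*x1*x1*x6 + (1/2)*x0*x0*x1*x6 - (3/4)*Complex.I*x0*x1
        + Complex.I*x0*x1*x6 - (1/2)*Complex.I*x0*x0*x1 + (1/2)*Complex.I*x0*x0*x1*x6
        - (1/4)*Complex.I*Complex.I*x0 - (1/4)*Complex.I*Complex.I*x0*x1
        - (1/2)*Complex.I*Complex.I*x0*x0 - (1/4)*Complex.I*Complex.I*Complex.I*x0) * hI
  have hE6 : x6 * (x0 * x1)
      = -((Complex.I * x0 + (1+Complex.I)/2 * Complex.I) * (Complex.I + x1)) :=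
    mul_right_cancel₀ hP hE6'
  have hD6 : (Complex.I + x6) * (x0 * x1)
      = x0 + (1+Complex.I)/2 - Complex.I * ((1+Complex.I)/2) * x1 := by
    linear_combination hE6 + (- (1/2) - x0 - (1/2)*Complex.I) * hI
  have hT : x0 + (1+Complex.I)/2 - Complex.I * ((1+Complex.I)/2) * x1 ≠ 0 := by
    rw [← hD6]; exact mul_ne_zero d6 (mul_ne_zero hx0 hx1)
  -- x7
  have hE7' : x7 * x1 * ((1+Complex.I)/2 * Complex.I * x0 * x1 + Complex.I * ((1+Complex.I)/2) * x1 - x0 - (1+Complex.I)/2)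
      = (x0 + (1+Complex.I)/2 - Complex.I * x1)
        * ((1+Complex.I)/2 * Complex.I * x0 * x1 + Complex.I * ((1+Complex.I)/2) * x1 - x0 - (1+Complex.I)/2) := by
    linear_combination (Complex.I * x0 * (Complex.I * (x0 + (1+Complex.I)/2) + x1) * x1) * r5
      - x7 * x1 * hD5 + (Complex.I * (Complex.I * (x0 + (1+Complex.I)/2) + x1)) * hE6
      + ((1/4) + x0 + x0*x0 + (1/2)*Complex.I - (3/4)*Complex.I*x1 + Complex.I*x0
        - (7/4)*Complex.I*x0*x1 + (1/2)*Complex.I*x0*x1*x1 - (1/2)*Complex.I*x0*x0*x1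
        - Complex.I*Complex.I*x1 - Complex.I*Complex.I*x0 - (3/4)*Complex.I*Complex.I*x0*x1
        - Complex.I*Complex.I*x0*x0 - (1/2)*Complex.I*Complex.I*Complex.I
        - (1/4)*Complex.I*Complex.I*Complex.I*x1 - Complex.I*Complex.I*Complex.I*x0
        - (1/4)*Complex.I*Complex.I*Complex.I*Complex.I) * hI
  have hE7 : x7 * x1 = x0 + (1+Complex.I)/2 - Complex.I * x1 := mul_right_cancel₀ hS hE7'
  -- conclusion
  have hF : x8 * (x0 + (1+Complex.I)/2 - Complex.I * ((1+Complex.I)/2) * x1)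
      = x0 * (x0 + (1+Complex.I)/2 - Complex.I * ((1+Complex.I)/2) * x1) := by
    linear_combination x0 * x1 * r6 - x8 * hD6 + x0 * hE7 + ((1/2)*x0*x1) * hI
  exact mul_right_cancel₀ hT hF

/-- For `a = (1+i)/2`, `b = i`: a complex sequence with `b + u(n) ≠ 0` for all `n`
satisfying `u(n+2)·(b + u(n)) = a + u(n+1)` is periodic of period 8 (parameters in
`V₂`). -/
theorem stmt17 (u : ℕ → ℂ) (h0 : ∀ n, Complex.I + u n ≠ 0)
    (hrec : ∀ n, u (n + 2) * (Complex.I + u n) = (1 + Complex.I) / 2 + u (n + 1)) :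
    ∀ n, u (n + 8) = u n := by
  intro n
  exact stmt17_key (u n) (u (n+1)) (u (n+2)) (u (n+3)) (u (n+4)) (u (n+5)) (u (n+6)) (u (n+7)) (u (n+8))
    (h0 n) (h0 (n+1)) (h0 (n+2)) (h0 (n+3)) (h0 (n+4)) (h0 (n+5)) (h0 (n+6))
    (hrec n) (hrec (n+1)) (hrec (n+2)) (hrec (n+3)) (hrec (n+4)) (hrec (n+5)) (hrec (n+6))
end

section
/- Fix a ∈ ℂ and define h(x,y) = (x + y + a)(x + 1)(y + 1)/(xy) for x, y ∈ ℂ with xy ≠ 0. Then h is invariant under the map f(x,y) = (y, (a+y)/x): for all x, y ∈ ℂ with x ≠ 0, y ≠ 0 and a + y ≠ 0, one has h(y, (a+y)/x) = h(x, y). (This is the invariant fibration by cubic curves {h = const} for the quadratic-growth maps with parameters (a, 0) in V₆, derived in §6.) -/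
/-- The function `h(x,y) = (x + y + a)(x + 1)(y + 1)/(xy)` is invariant under the map
`f(x,y) = (y, (a+y)/x)`: for `x ≠ 0`, `y ≠ 0`, `a + y ≠ 0` one has
`h(y, (a+y)/x) = h(x, y)`. -/
theorem stmt19 (a : ℂ) (h : ℂ → ℂ → ℂ)
    (hh : ∀ x y : ℂ, h x y = (x + y + a) * (x + 1) * (y + 1) / (x * y)) :
    ∀ x y : ℂ, x ≠ 0 → y ≠ 0 → a + y ≠ 0 → h y ((a + y) / x) = h x y := by
  intro x y hx hy hay
  rw [hh, hh]
  field_simp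
  ring
end
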